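/- Let ℓ ≠ q be positive integers and 0 < κ < 1/2 with 2ℓκ ∉ ℕ or 2qκ ∉ ℕ. If χ₁(κ; ℓ, q) = 0 then χ₂(κ; ℓ, q) ≠ 0, where χ₁(κ; ℓ, q) = sin(2π(ℓ−q)κ)/(2π(ℓ−q)) + sin(2π(ℓ+q)κ)/(2π(ℓ+q)) − sin(2πqκ)/(πq) and χ₂(κ; ℓ, q) = sin(2π(ℓ−q)κ)/(2π(ℓ−q)) − sin(2π(ℓ+q)κ)/(2π(ℓ+q)). -/

import Mathlib

/-!
Write `a = 2πℓκ` and `b = 2πqκ`. Each term of `χ₁` and `χ₂` is `κ` times a value of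
`sinc`, so `χ₁ = χ₂ = 0` says `sinc (a - b) = sinc (a + b) = sinc b`. Cross-multiplying and
expanding `sin (a ± b)`, the sum and difference of the two identities give
`sin b · b · (cos a - 1) = 0` and `sin a · cos b · b = sin b · a`; with `sin² + cos² = 1` this
forces `sin a = sin b = 0`, i.e. both `2ℓκ` and `2qκ` are integers.
-/

open Real

namespace Real

variable {x y : ℝ}

lemma sinc_ne_one (hx : x ≠ 0) : sinc x ≠ 1 := by
  rw [sinc_of_ne_zero hx, Ne, div_eq_one_iff_eq hx]
  intro h
  exact (abs_sin_lt_abs hx).ne (congrArg abs h)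

lemma sin_eq_zero_of_sin_sub_mul_eq_of_sin_add_mul_eq (hx : x ≠ 0) (hy : y ≠ 0)
    (hsub : sin (x - y) * y = sin y * (x - y)) (hadd : sin (x + y) * y = sin y * (x + y)) :
    sin x = 0 ∧ sin y = 0 := by
  rw [sin_sub] at hsub
  rw [sin_add] at hadd
  have hsum : sin x * cos y * y = sin y * x := by linear_combination (hsub + hadd) / 2
  have hdiff : sin y * y * (cos x - 1) = 0 := by linear_combination (hadd - hsub) / 2
  rcases mul_eq_zero.1 hdiff with hsy | hcx
  · have hsy : sin y = 0 := (mul_eq_zero.1 hsy).resolve_right hy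
    have hcy : cos y ≠ 0 := by
      intro hcy
      simpa [hsy, hcy] using sin_sq_add_cos_sq y
    rw [hsy, zero_mul] at hsum
    exact ⟨by simpa [hcy, hy] using hsum, hsy⟩
  · have hsx : sin x = 0 := by
      nlinarith [sin_sq_add_cos_sq x, sub_eq_zero.1 hcx]
    rw [hsx, zero_mul, zero_mul, eq_comm] at hsum
    exact ⟨hsx, (mul_eq_zero.1 hsum).resolve_right hx⟩

lemma sin_eq_zero_of_sinc_sub_eq_of_sinc_add_eq (hx : x ≠ 0) (hy : y ≠ 0)
    (hsub : sinc (x - y) = sinc y) (hadd : sinc (x + y) = sinc y) :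
    sin x = 0 ∧ sin y = 0 := by
  have hxy : x - y ≠ 0 := fun h ↦ sinc_ne_one hy (by rw [← hsub, h, sinc_zero])
  have hxy' : x + y ≠ 0 := fun h ↦ sinc_ne_one hy (by rw [← hadd, h, sinc_zero])
  rw [sinc_of_ne_zero hxy, sinc_of_ne_zero hy, div_eq_div_iff hxy hy] at hsub
  rw [sinc_of_ne_zero hxy', sinc_of_ne_zero hy, div_eq_div_iff hxy' hy] at hadd
  exact sin_eq_zero_of_sin_sub_mul_eq_of_sin_add_mul_eq hx hy hsub hadd

lemma sin_mul_div_eq_mul_sinc {a : ℝ} (ha : a ≠ 0) (κ : ℝ) :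
    sin (a * κ) / a = κ * sinc (a * κ) := by
  rcases eq_or_ne κ 0 with rfl | hκ
  · simp
  · rw [sinc_of_ne_zero (mul_ne_zero ha hκ)]
    field_simp

lemma exists_nat_eq_of_sin_pi_mul_eq_zero (hx : 0 ≤ x) (h : sin (π * x) = 0) :
    ∃ n : ℕ, x = n := by
  obtain ⟨n, hn⟩ := sin_eq_zero_iff.1 h
  have hnx : x = n := by
    apply mul_left_cancel₀ pi_ne_zero
    linear_combination -hn
  lift n to ℕ using by exact_mod_cast hnx ▸ hx
  exact ⟨n, mod_cast hnx⟩

end Real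

theorem chi2_nonzero_of_chi1_zero_general
    (ℓ q : ℕ) (hℓ : 1 ≤ ℓ) (hq : 1 ≤ q) (hne : ℓ ≠ q)
    (κ : ℝ) (hκ : 0 < κ)
    (hnat : (¬ ∃ n : ℕ, 2*(ℓ:ℝ)*κ = n) ∨ (¬ ∃ n : ℕ, 2*(q:ℝ)*κ = n))
    (h₁ : Real.sin (2*π*((ℓ:ℝ)-q)*κ) / (2*π*((ℓ:ℝ)-q))
        + Real.sin (2*π*((ℓ:ℝ)+q)*κ) / (2*π*((ℓ:ℝ)+q))
        - Real.sin (2*π*q*κ) / (π*q) = 0) :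
    Real.sin (2*π*((ℓ:ℝ)-q)*κ) / (2*π*((ℓ:ℝ)-q))
      - Real.sin (2*π*((ℓ:ℝ)+q)*κ) / (2*π*((ℓ:ℝ)+q)) ≠ 0 := by
  intro h₂
  have hℓ₀ : (0 : ℝ) < ℓ := by exact_mod_cast hℓ
  have hq₀ : (0 : ℝ) < q := by exact_mod_cast hq
  have hℓq : 2*π*((ℓ:ℝ)-q) ≠ 0 := by
    have : (ℓ:ℝ) - q ≠ 0 := sub_ne_zero.2 (by exact_mod_cast hne)
    positivity
  have hχ : Real.sin (2*π*q*κ) / (π*q) = 2 * (κ * sinc (2*π*q*κ)) := by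
    rw [← sin_mul_div_eq_mul_sinc (by positivity)]
    field_simp
  rw [sin_mul_div_eq_mul_sinc hℓq, sin_mul_div_eq_mul_sinc (by positivity)] at h₁ h₂
  rw [hχ] at h₁
  rw [show 2*π*((ℓ:ℝ)-q)*κ = 2*π*ℓ*κ - 2*π*q*κ by ring,
    show 2*π*((ℓ:ℝ)+q)*κ = 2*π*ℓ*κ + 2*π*q*κ by ring] at h₁ h₂
  obtain ⟨hsinℓ, hsinq⟩ := sin_eq_zero_of_sinc_sub_eq_of_sinc_add_eq
    (x := 2*π*ℓ*κ) (y := 2*π*q*κ) (by positivity) (by positivity)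
    (mul_left_cancel₀ hκ.ne' (by linear_combination (h₁ + h₂) / 2))
    (mul_left_cancel₀ hκ.ne' (by linear_combination (h₁ - h₂) / 2))
  rcases hnat with hnat | hnat
  · exact hnat <| exists_nat_eq_of_sin_pi_mul_eq_zero (by positivity)
      (by convert hsinℓ using 2; ring)
  · exact hnat <| exists_nat_eq_of_sin_pi_mul_eq_zero (by positivity)
      (by convert hsinq using 2; ring)

theorem chi2_nonzero_of_chi1_zero
    (ℓ q : ℕ) (hℓ : 1 ≤ ℓ) (hq : 1 ≤ q) (hne : ℓ ≠ q)
    (κ : ℝ) (hκ : 0 < κ) (hκ' : κ < 1/2)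
    (hnat : (¬ ∃ n : ℕ, 2*(ℓ:ℝ)*κ = n) ∨ (¬ ∃ n : ℕ, 2*(q:ℝ)*κ = n))
    (h₁ : Real.sin (2*π*((ℓ:ℝ)-q)*κ) / (2*π*((ℓ:ℝ)-q))
        + Real.sin (2*π*((ℓ:ℝ)+q)*κ) / (2*π*((ℓ:ℝ)+q))
        - Real.sin (2*π*q*κ) / (π*q) = 0) :
    Real.sin (2*π*((ℓ:ℝ)-q)*κ) / (2*π*((ℓ:ℝ)-q))
      - Real.sin (2*π*((ℓ:ℝ)+q)*κ) / (2*π*((ℓ:ℝ)+q)) ≠ 0 :=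
  chi2_nonzero_of_chi1_zero_general ℓ q hℓ hq hne κ hκ hnat h₁
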